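/- Let f : [t₀,t₁] × ℝⁿ × ℝ^s → ℝ and g : [t₀,t₁] × ℝⁿ × ℝ^s → ℝⁿ be continuously differentiable, let y(t,p) solve y' = g(t,y,p), y(t₀) = y₀ with y differentiable in p, and define L(p) = ∫_{t₀}^{t₁} f(t, y(t,p), p) dt. Suppose λ : [t₀,t₁] → ℝⁿ is C¹ and satisfies the adjoint equation λ'(t) = -∇_y f(t,y(t,p),p) - (∂g/∂y)(t,y(t,p),p)ᵀ λ(t) with terminal condition λ(t₁) = 0. Then ∂L/∂p_r = ∫_{t₀}^{t₁} [ ∂f/∂p_r(t,y(t,p),p) + λ(t) · ∂g/∂p_r(t,y(t,p),p) ] dt. -/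

import Mathlib

open Finset intervalIntegral

open scoped Interval

/-!
Along a solution of `y' = g`, the integral of `λ' ⬝ y + λ ⬝ g` is `[λ ⬝ y]_{t₀}^{t₁} = -λ(t₀) ⬝ y₀`,
independent of `p`. So `L` differs by a constant from the integral of the Lagrangian
`f + λ ⬝ g + λ' ⬝ y`, which we differentiate under the integral sign. In its `p`-derivative the
state sensitivity `∂y/∂p` only enters through `(∇_y f + (∂g/∂y)ᵀ λ + λ') ⬝ ∂y/∂p`, which the
adjoint equation kills; what remains is `∂f/∂p + λ ⬝ ∂g/∂p`.
-/

section Leibniz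

variable {W E F : Type*} [NormedAddCommGroup W] [NormedSpace ℝ W]
  [NormedAddCommGroup E] [NormedSpace ℝ E] [ProperSpace E]
  [NormedAddCommGroup F] [NormedSpace ℝ F]

theorem hasFDerivAt_intervalIntegral_of_continuousOn {Φ : E → ℝ → F} {Φ' : ℝ × E → E →L[ℝ] F}
    {a b : ℝ} (p : E) (hΦ : ∀ x, ContinuousOn (Φ x) [[a, b]])
    (hΦ' : ∀ t ∈ [[a, b]], ∀ x, HasFDerivAt (Φ · t) (Φ' (t, x)) x)
    (hΦ'c : ContinuousOn Φ' ([[a, b]] ×ˢ Set.univ)) :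
    HasFDerivAt (fun x => ∫ t in a..b, Φ x t) (∫ t in a..b, Φ' (t, p)) p := by
  -- `Φ'` is bounded on the compact `[[a, b]] × closedBall p 1`, which gives the domination
  obtain ⟨C, hC⟩ : ∃ C, ∀ z ∈ [[a, b]] ×ˢ Metric.closedBall p 1, ‖Φ' z‖ ≤ C :=
    (isCompact_uIcc.prod (isCompact_closedBall p 1)).exists_bound_of_continuousOn
      (hΦ'c.mono (Set.prod_mono_right (Set.subset_univ _)))
  have hΦ'p : ContinuousOn (fun t => Φ' (t, p)) [[a, b]] :=
    hΦ'c.comp (continuous_id.prodMk continuous_const).continuousOn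
      fun t ht => ⟨ht, Set.mem_univ _⟩
  exact hasFDerivAt_integral_of_dominated_of_fderiv_le (bound := fun _ => C)
    (Metric.ball_mem_nhds p one_pos)
    (.of_forall fun x => ((hΦ x).mono Set.uIoc_subset_uIcc).aestronglyMeasurable measurableSet_uIoc)
    (hΦ p).intervalIntegrable
    ((hΦ'p.mono Set.uIoc_subset_uIcc).aestronglyMeasurable measurableSet_uIoc)
    (.of_forall fun t ht x hx =>
      hC (t, x) ⟨Set.uIoc_subset_uIcc ht, Metric.ball_subset_closedBall hx⟩)
    intervalIntegrable_const
    (.of_forall fun t ht x _ => hΦ' t (Set.uIoc_subset_uIcc ht) x)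

theorem fderiv_intervalIntegral_apply_of_contDiff {Ψ : W × E → F} (hΨ : ContDiff ℝ 1 Ψ)
    {c : ℝ → W} {a b : ℝ} (hc : ContinuousOn c [[a, b]]) (p v : E) :
    fderiv ℝ (fun x => ∫ t in a..b, Ψ (c t, x)) p v =
      ∫ t in a..b, fderiv ℝ (fun x => Ψ (c t, x)) p v := by
  have hpartial (w : W) (x : E) :
      HasFDerivAt (fun x => Ψ (w, x)) ((fderiv ℝ Ψ (w, x)).comp (.inr ℝ W E)) x :=
    (hΨ.differentiable one_ne_zero _).hasFDerivAt.comp x (hasFDerivAt_prodMk_right w x)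
  have hΨ'c : ContinuousOn (fun z : ℝ × E => (fderiv ℝ Ψ (c z.1, z.2)).comp (.inr ℝ W E))
      ([[a, b]] ×ˢ Set.univ) :=
    ((hΨ.continuous_fderiv one_ne_zero).comp_continuousOn
      ((hc.comp continuousOn_fst fun z hz => hz.1).prodMk continuousOn_snd)).clm_comp
      continuousOn_const
  have hΨ'p : IntervalIntegrable (fun t => (fderiv ℝ Ψ (c t, p)).comp (.inr ℝ W E))
      MeasureTheory.volume a b :=
    (hΨ'c.comp (continuous_id.prodMk continuous_const).continuousOn
      fun t ht => ⟨ht, Set.mem_univ _⟩).intervalIntegrable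
  rw [(hasFDerivAt_intervalIntegral_of_continuousOn (Φ := fun x t => Ψ (c t, x)) p
    (fun x => hΨ.continuous.comp_continuousOn (hc.prodMk continuousOn_const))
    (fun t _ x => hpartial (c t) x) hΨ'c).fderiv, ContinuousLinearMap.intervalIntegral_apply hΨ'p]
  simp only [fun t => (hpartial (c t) p).fderiv]

end Leibniz

theorem integral_sum_deriv_mul_eq_sub {ι : Type*} [Fintype ι] {u v u' v' : ℝ → ι → ℝ} {a b : ℝ}
    (hu : ∀ t ∈ [[a, b]], HasDerivAt u (u' t) t) (hv : ∀ t ∈ [[a, b]], HasDerivAt v (v' t) t)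
    (hu' : ContinuousOn u' [[a, b]]) (hv' : ContinuousOn v' [[a, b]]) :
    ∫ t in a..b, ∑ k, (u' t k * v t k + u t k * v' t k) =
      ∑ k, u b k * v b k - ∑ k, u a k * v a k := by
  have hu_cont : ContinuousOn u [[a, b]] := HasDerivAt.continuousOn hu
  have hv_cont : ContinuousOn v [[a, b]] := HasDerivAt.continuousOn hv
  refine integral_eq_sub_of_hasDerivAt (f := fun t => ∑ k, u t k * v t k)
    (fun t ht => HasDerivAt.fun_sum fun k _ =>
      (hasDerivAt_pi.1 (hu t ht) k).mul (hasDerivAt_pi.1 (hv t ht) k))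
    (ContinuousOn.intervalIntegrable ?_)
  fun_prop

theorem HasFDerivAt.add_comp_of_comp_inl_eq_neg {E P F : Type*} [NormedAddCommGroup E]
    [NormedSpace ℝ E] [NormedAddCommGroup P] [NormedSpace ℝ P] [NormedAddCommGroup F]
    [NormedSpace ℝ F] {H : E × P → F} {H' : E × P →L[ℝ] F} {Y : P → E} {Y' : P →L[ℝ] E}
    {μ : E →L[ℝ] F} {p : P} (hH : HasFDerivAt H H' (Y p, p)) (hY : HasFDerivAt Y Y' p)
    (hμ : H'.comp (.inl ℝ E P) = -μ) :
    HasFDerivAt (fun q => H (Y q, q) + μ (Y q)) (H'.comp (.inr ℝ E P)) p := by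
  refine ((hH.comp (f := fun q => (Y q, q)) p (hY.prodMk (hasFDerivAt_id p))).add
    (μ.hasFDerivAt.comp p hY)).congr_fderiv ?_
  ext v
  have hsplit : H' (Y' v, v) = H'.comp (.inl ℝ E P) (Y' v) + H' (0, v) := by
    simp [← map_add]
  simp [hsplit, hμ]

section AdjointState

variable {n s : ℕ} (f : ℝ → (Fin n → ℝ) → (Fin s → ℝ) → ℝ)
  (g : ℝ → (Fin n → ℝ) → (Fin s → ℝ) → Fin n → ℝ) (y : ℝ → (Fin s → ℝ) → Fin n → ℝ)

/-- `f + λ ⬝ g + λ' ⬝ y` along `y`, with `(t, λ t, λ' t)` as a variable of its own: this makes it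
jointly `C¹` although `λ'` is only continuous. -/
def lagrangian : (ℝ × (Fin n → ℝ) × (Fin n → ℝ)) × (Fin s → ℝ) → ℝ
  | ((t, a, b), q) => f t (y t q) q + ∑ k, a k * g t (y t q) q k + ∑ k, b k * y t q k

variable {f g y}

theorem contDiff_lagrangian
    (hf : ContDiff ℝ 1 (fun q : ℝ × (Fin n → ℝ) × (Fin s → ℝ) => f q.1 q.2.1 q.2.2))
    (hg : ContDiff ℝ 1 (fun q : ℝ × (Fin n → ℝ) × (Fin s → ℝ) => g q.1 q.2.1 q.2.2))
    (hy : ContDiff ℝ 1 (fun q : ℝ × (Fin s → ℝ) => y q.1 q.2)) :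
    ContDiff ℝ 1 (lagrangian f g y) := by
  have hy' : ContDiff ℝ 1 fun z : (ℝ × (Fin n → ℝ) × (Fin n → ℝ)) × (Fin s → ℝ) =>
      y z.1.1 z.2 := hy.comp (contDiff_fst.fst.prodMk contDiff_snd)
  have hstate : ContDiff ℝ 1 fun z : (ℝ × (Fin n → ℝ) × (Fin n → ℝ)) × (Fin s → ℝ) =>
      (z.1.1, y z.1.1 z.2, z.2) := contDiff_fst.fst.prodMk (hy'.prodMk contDiff_snd)
  have hf' := hf.comp hstate
  have hg' := hg.comp hstate
  show ContDiff ℝ 1 fun z : (ℝ × (Fin n → ℝ) × (Fin n → ℝ)) × (Fin s → ℝ) =>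
    f z.1.1 (y z.1.1 z.2) z.2 + ∑ k, z.1.2.1 k * g z.1.1 (y z.1.1 z.2) z.2 k +
      ∑ k, z.1.2.2 k * y z.1.1 z.2 k
  fun_prop

theorem integral_lagrangian {a b : ℝ} {q : Fin s → ℝ} {y₀ : Fin n → ℝ} {l l' : ℝ → Fin n → ℝ}
    (hf : Continuous (fun q : ℝ × (Fin n → ℝ) × (Fin s → ℝ) => f q.1 q.2.1 q.2.2))
    (hg : Continuous (fun q : ℝ × (Fin n → ℝ) × (Fin s → ℝ) => g q.1 q.2.1 q.2.2))
    (hode : ∀ t ∈ [[a, b]], HasDerivAt (fun τ => y τ q) (g t (y t q) q) t) (hinit : y a q = y₀)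
    (hl : ∀ t ∈ [[a, b]], HasDerivAt l (l' t) t) (hl'cont : ContinuousOn l' [[a, b]])
    (hterm : l b = 0) :
    ∫ t in a..b, lagrangian f g y ((t, l t, l' t), q) =
      (∫ t in a..b, f t (y t q) q) - ∑ k, l a k * y₀ k := by
  have hy : ContinuousOn (fun t => y t q) [[a, b]] := HasDerivAt.continuousOn hode
  have hl_cont : ContinuousOn l [[a, b]] := HasDerivAt.continuousOn hl
  have hstate : ContinuousOn (fun t => (t, y t q, q)) [[a, b]] :=
    continuousOn_id.prodMk (hy.prodMk continuousOn_const)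
  have hf_cont : ContinuousOn (fun t => f t (y t q) q) [[a, b]] := hf.comp_continuousOn hstate
  have hg_cont : ContinuousOn (fun t => g t (y t q) q) [[a, b]] := hg.comp_continuousOn hstate
  have hibp := integral_sum_deriv_mul_eq_sub hl hode hl'cont hg_cont
  simp only [hterm, hinit, Pi.zero_apply, zero_mul, sum_const_zero, zero_sub] at hibp
  calc ∫ t in a..b, lagrangian f g y ((t, l t, l' t), q)
      = ∫ t in a..b, (f t (y t q) q + ∑ k, (l' t k * y t q k + l t k * g t (y t q) q k)) :=
        integral_congr fun t _ => by simp only [lagrangian, sum_add_distrib]; ring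
    _ = (∫ t in a..b, f t (y t q) q) - ∑ k, l a k * y₀ k := by
        rw [integral_add hf_cont.intervalIntegrable (ContinuousOn.intervalIntegrable (by fun_prop)),
          hibp, sub_eq_add_neg]

theorem fderiv_lagrangian_apply {t : ℝ} {a b : Fin n → ℝ} {p v : Fin s → ℝ}
    (hf : Differentiable ℝ (fun q : ℝ × (Fin n → ℝ) × (Fin s → ℝ) => f q.1 q.2.1 q.2.2))
    (hg : Differentiable ℝ (fun q : ℝ × (Fin n → ℝ) × (Fin s → ℝ) => g q.1 q.2.1 q.2.2))
    (hy : DifferentiableAt ℝ (y t) p)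
    (hadj : ∀ i, b i = -(fderiv ℝ (fun x => f t x p + ∑ k, a k * g t x p k) (y t p))
      (Pi.single i 1)) :
    fderiv ℝ (fun q => lagrangian f g y ((t, a, b), q)) p v =
      fderiv ℝ (fun q => f t (y t p) q) p v +
        ∑ k, a k * fderiv ℝ (fun q => g t (y t p) q k) p v := by
  have hft : Differentiable ℝ fun w : (Fin n → ℝ) × (Fin s → ℝ) => f t w.1 w.2 :=
    hf.comp ((differentiable_const t).prodMk differentiable_id)
  have hgt : Differentiable ℝ fun w : (Fin n → ℝ) × (Fin s → ℝ) => g t w.1 w.2 :=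
    hg.comp ((differentiable_const t).prodMk differentiable_id)
  set H : (Fin n → ℝ) × (Fin s → ℝ) → ℝ := fun w => f t w.1 w.2 + ∑ k, a k * g t w.1 w.2 k
  have hH : HasFDerivAt H (fderiv ℝ H (y t p, p)) (y t p, p) :=
    ((by fun_prop : Differentiable ℝ H) _).hasFDerivAt
  set μ : (Fin n → ℝ) →L[ℝ] ℝ := ∑ i, b i • ContinuousLinearMap.proj i
  have hμ : (fderiv ℝ H (y t p, p)).comp (.inl ℝ _ _) = -μ := by
    rw [← (hH.comp (y t p) (hasFDerivAt_prodMk_left (y t p) p)).fderiv]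
    refine ContinuousLinearMap.coe_injective ((Pi.basisFun ℝ (Fin n)).ext fun i => ?_)
    simp [μ, hadj, H, Pi.single_apply, Function.comp_def]
  have hlag : (fun q => lagrangian f g y ((t, a, b), q)) = fun q => H (y t q, q) + μ (y t q) := by
    funext q
    simp [lagrangian, H, μ]
  have hinr : HasFDerivAt (fun q => H (y t p, q)) ((fderiv ℝ H (y t p, p)).comp (.inr ℝ _ _)) p :=
    hH.comp p (hasFDerivAt_prodMk_right (y t p) p)
  rw [hlag, (hH.add_comp_of_comp_inl_eq_neg hy.hasFDerivAt hμ).fderiv, ← hinr.fderiv]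
  simp only [H]
  rw [fderiv_fun_add (by fun_prop) (by fun_prop), fderiv_fun_sum (fun k _ => by fun_prop),
    _root_.add_apply, _root_.sum_apply]
  refine congrArg _ (sum_congr rfl fun k _ => ?_)
  rw [fderiv_const_mul (by fun_prop), _root_.smul_apply, smul_eq_mul]

end AdjointState

/-- Adjoint-state gradient formula: if `y(t,p)` solves `y' = g(t,y,p)` with
`y(t₀,p) = y₀` independent of `p`, `L(p) = ∫_{t₀}^{t₁} f(t,y(t,p),p) dt`, and
`λ` is `C¹` and solves the adjoint equation
`λ' = -∇_y f - (∂g/∂y)ᵀ λ` with `λ(t₁) = 0`, then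
`∂L/∂p_r = ∫_{t₀}^{t₁} (∂f/∂p_r + λ · ∂g/∂p_r) dt`. -/
theorem adjoint_gradient_formula {n s : ℕ} (t₀ t₁ : ℝ) (ht : t₀ ≤ t₁)
    (f : ℝ → (Fin n → ℝ) → (Fin s → ℝ) → ℝ)
    (g : ℝ → (Fin n → ℝ) → (Fin s → ℝ) → Fin n → ℝ)
    (hf : ContDiff ℝ 1 (fun q : ℝ × (Fin n → ℝ) × (Fin s → ℝ) => f q.1 q.2.1 q.2.2))
    (hg : ContDiff ℝ 1 (fun q : ℝ × (Fin n → ℝ) × (Fin s → ℝ) => g q.1 q.2.1 q.2.2))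
    (y : ℝ → (Fin s → ℝ) → Fin n → ℝ) (y₀ : Fin n → ℝ)
    (hy : ContDiff ℝ 1 (fun q : ℝ × (Fin s → ℝ) => y q.1 q.2))
    (hode : ∀ t ∈ Set.Icc t₀ t₁, ∀ q, HasDerivAt (fun τ => y τ q) (g t (y t q) q) t)
    (hinit : ∀ q, y t₀ q = y₀)
    (p : Fin s → ℝ) (r : Fin s)
    (L : (Fin s → ℝ) → ℝ)
    (hL : L = fun q => ∫ t in t₀..t₁, f t (y t q) q)
    (l l' : ℝ → Fin n → ℝ)
    (hl : ∀ t ∈ Set.Icc t₀ t₁, HasDerivAt l (l' t) t)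
    (hl'cont : ContinuousOn l' (Set.Icc t₀ t₁))
    -- adjoint equation: λ_i' = -∂/∂y_i [f + λ·g]  (i.e. λ' = -∇_y f - (∂g/∂y)ᵀ λ)
    (hadj : ∀ t ∈ Set.Icc t₀ t₁, ∀ i,
      l' t i =
        -(fderiv ℝ (fun x => f t x p + ∑ k, l t k * g t x p k) (y t p))
          (Pi.single i 1))
    (hterm : l t₁ = 0) :
    fderiv ℝ L p (Pi.single r 1) =
      ∫ t in t₀..t₁,
        (fderiv ℝ (fun q => f t (y t p) q) p (Pi.single r 1) +
          ∑ k, l t k * fderiv ℝ (fun q => g t (y t p) q k) p (Pi.single r 1)) := by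
  rw [← Set.uIcc_of_le ht] at hode hl hl'cont hadj
  have hL' : L = fun q => (∫ t in t₀..t₁, lagrangian f g y ((t, l t, l' t), q)) +
      ∑ k, l t₀ k * y₀ k := by
    ext q
    rw [integral_lagrangian hf.continuous hg.continuous (fun t ht => hode t ht q) (hinit q) hl
      hl'cont hterm, hL, sub_add_cancel]
  have hcoef : ContinuousOn (fun t => (t, l t, l' t)) [[t₀, t₁]] :=
    continuousOn_id.prodMk ((HasDerivAt.continuousOn hl).prodMk hl'cont)
  rw [hL', fderiv_add_const,
    fderiv_intervalIntegral_apply_of_contDiff (contDiff_lagrangian hf hg hy) hcoef]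
  refine integral_congr fun t ht => fderiv_lagrangian_apply (hf.differentiable one_ne_zero)
    (hg.differentiable one_ne_zero) ?_ (hadj t ht)
  exact ((hy.differentiable one_ne_zero).comp ((differentiable_const t).prodMk differentiable_id)) p
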